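/- For every n ≥ 2 such that n is not a power of 2, the order superpower graph S(SD_{8n}) of the semidihedral group SD_{8n} of order 8n is not minimally edge connected. -/

import Mathlib

/-- The degree of a vertex: the number of its neighbours. -/
noncomputable def gDeg {V : Type*} (G : SimpleGraph V) (v : V) : ℕ :=
  (G.neighborSet v).ncard

/-- The minimum degree of a graph. -/
noncomputable def minDeg {V : Type*} (G : SimpleGraph V) : ℕ :=
  sInf (Set.range (gDeg G))

/-- The edge connectivity: the minimum size of a set of edges whose removal
disconnects the graph. -/
noncomputable def edgeConn {V : Type*} (G : SimpleGraph V) : ℕ :=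
  sInf {n : ℕ | ∃ S : Set (Sym2 V), S ⊆ G.edgeSet ∧ S.ncard = n ∧
    ¬ (G.deleteEdges S).Connected}

/-- The vertex connectivity: the minimum size of a set of vertices whose removal
disconnects the graph or leaves a single vertex. -/
noncomputable def vertexConn {V : Type*} (G : SimpleGraph V) : ℕ :=
  sInf {n : ℕ | ∃ S : Set V, S.ncard = n ∧ Sᶜ.Nonempty ∧
    (¬ (G.induce Sᶜ).Preconnected ∨ Sᶜ.ncard = 1)}

/-- A graph is minimally edge connected if deleting any edge decreases the
edge connectivity by one. -/
def MinEdgeConnected {V : Type*} (G : SimpleGraph V) : Prop :=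
  ∀ e ∈ G.edgeSet, edgeConn (G.deleteEdges {e}) = edgeConn G - 1

/-- A graph is minimally connected if deleting any edge decreases the
vertex connectivity by one. -/
def MinConnected {V : Type*} (G : SimpleGraph V) : Prop :=
  ∀ e ∈ G.edgeSet, vertexConn (G.deleteEdges {e}) = vertexConn G - 1

/-- The power graph of a group: distinct `x, y` are adjacent iff one is a
natural power of the other. -/
def powerGraph (G : Type*) [Group G] : SimpleGraph G :=
  SimpleGraph.fromRel (fun x y => ∃ m : ℕ, y = x ^ m)

/-- The enhanced power graph of a group: distinct `x, y` are adjacent iff they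
lie in a common cyclic subgroup. -/
def enhancedPowerGraph (G : Type*) [Group G] : SimpleGraph G :=
  SimpleGraph.fromRel
    (fun x y => ∃ z : G, x ∈ Subgroup.zpowers z ∧ y ∈ Subgroup.zpowers z)

/-- The order superpower graph of a group: distinct `x, y` are adjacent iff the
order of one divides the order of the other. -/
def superpowerGraph (G : Type*) [Group G] : SimpleGraph G :=
  SimpleGraph.fromRel (fun x y => orderOf x ∣ orderOf y)

/-- The relators of the semidihedral group
`SD_{8n} = ⟨a, b : a^{4n} = b^2 = e, b a = a^{2n-1} b⟩`, where the generator `a`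
is `FreeGroup.of 0` and `b` is `FreeGroup.of 1`. -/
def sdRels (n : ℕ) : Set (FreeGroup (Fin 2)) :=
  {FreeGroup.of 0 ^ (4 * n), FreeGroup.of 1 ^ 2,
    (FreeGroup.of 1 * FreeGroup.of 0) *
      (FreeGroup.of 0 ^ (2 * n - 1) * FreeGroup.of 1)⁻¹}

/-- The semidihedral group `SD_{8n}` of order `8n`, given by the presentation
`⟨a, b : a^{4n} = b^2 = e, b a = a^{2n-1} b⟩`. -/
abbrev SemidihedralGroup (n : ℕ) : Type := PresentedGroup (sdRels n)

/-!
In `SD_{8n}` the element `a` has order `4n`, which is also the exponent of the group, so `1` and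
`a` are adjacent to every other vertex of the order superpower graph; if `n` has an odd prime
factor `p`, the powers of `a` of orders `2` and `p` are not adjacent.

Let `G` be a finite graph with two universal vertices `u₁, u₂` that is not complete. Deleting
the star of a vertex of minimum degree shows `κ'(G) ≤ δ(G)`. On the other hand every edge cut of
`G - u₁u₂` has at least `δ(G)` edges: a cut separating `u₁` from `u₂` has `|V| - 2` edges, and a
cut whose far side `C` avoids both contains, for any `v ∈ C`, the edges from `v` leaving `C`
together with the edges from `C \ {v}` to `u₁`, at least `deg v` in all. Hence deleting `u₁u₂`
does not lower the edge connectivity.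
-/

open SimpleGraph

section EdgeConnectivity

variable {V : Type*} {G : SimpleGraph V}

lemma minDeg_le_gDeg (v : V) : minDeg G ≤ gDeg G v := Nat.sInf_le ⟨v, rfl⟩

lemma exists_gDeg_eq_minDeg [Nonempty V] : ∃ v, gDeg G v = minDeg G :=
  Nat.sInf_mem (Set.range_nonempty _)

lemma gDeg_eq_ncard_incidenceSet (v : V) : gDeg G v = (G.incidenceSet v).ncard := by
  classical
  rw [gDeg, ← Nat.card_coe_set_eq, ← Nat.card_coe_set_eq]
  exact (Nat.card_congr (G.incidenceSetEquivNeighborSet v)).symm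

lemma edgeConn_le_gDeg {u v : V} (huv : u ≠ v) : edgeConn G ≤ gDeg G v := by
  refine Nat.sInf_le ⟨G.incidenceSet v, G.incidenceSet_subset v,
    (gDeg_eq_ncard_incidenceSet v).symm, fun hconn => ?_⟩
  obtain ⟨p⟩ := hconn.preconnected v u
  cases p with
  | nil => exact huv rfl
  | cons hadj _ =>
    obtain ⟨hGadj, hnotMem⟩ := deleteEdges_adj.mp hadj
    exact hnotMem (G.mk'_mem_incidenceSet_left_iff.mpr hGadj)

lemma gDeg_deleteEdges_singleton {a b v : V} (hva : v ≠ a) (hvb : v ≠ b) :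
    gDeg (G.deleteEdges {s(a, b)}) v = gDeg G v := by
  unfold gDeg
  congr 1
  ext z
  simp only [mem_neighborSet, deleteEdges_adj, Set.mem_singleton_iff, Sym2.eq_iff,
    and_iff_left_iff_imp]
  rintro - (⟨rfl, -⟩ | ⟨rfl, -⟩) <;> contradiction

variable [Finite V]

lemma ncard_compl_pair {a b : V} (hab : a ≠ b) :
    ({a, b}ᶜ : Set V).ncard = Nat.card V - 2 := by
  have := Set.ncard_add_ncard_compl ({a, b} : Set V)
  rw [Set.ncard_pair hab] at this
  omega

lemma gDeg_le_card_sub_two_of_not_adj {x y : V} (hxy : x ≠ y) (hnadj : ¬ G.Adj x y) :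
    gDeg G x ≤ Nat.card V - 2 := by
  rw [← ncard_compl_pair hxy]
  refine Set.ncard_le_ncard fun z hz => ?_
  rintro (rfl | rfl)
  exacts [G.irrefl hz, hnadj hz]

lemma gDeg_le_ncard_of_boundary_subset {S : Set (Sym2 V)} {C : Set V}
    (hS : ∀ z ∈ C, ∀ w ∉ C, G.Adj z w → s(z, w) ∈ S) {u v : V} (hu : u ∉ C) (hv : v ∈ C)
    (hCu : ∀ z ∈ C, z ≠ v → G.Adj z u) : gDeg G v ≤ S.ncard := by
  set T₁ := (fun z => s(v, z)) '' (G.neighborSet v \ C)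
  set T₂ := (fun z => s(z, u)) '' (C \ {v})
  have hT₁ : T₁.ncard = (G.neighborSet v \ C).ncard :=
    Set.ncard_image_of_injective _ fun _ _ => Sym2.congr_right.mp
  have hT₂ : T₂.ncard = (C \ {v}).ncard :=
    Set.ncard_image_of_injective _ fun _ _ => Sym2.congr_left.mp
  have hdisj : Disjoint T₁ T₂ := by
    rw [Set.disjoint_left]
    rintro _ ⟨z, -, rfl⟩ ⟨w, ⟨-, hwv⟩, h⟩
    rcases Sym2.eq_iff.mp h with ⟨rfl, -⟩ | ⟨-, rfl⟩
    exacts [hwv rfl, hu hv]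
  have hsub : T₁ ∪ T₂ ⊆ S := by
    rintro _ (⟨z, ⟨hz, hzC⟩, rfl⟩ | ⟨z, ⟨hzC, hzv⟩, rfl⟩)
    exacts [hS v hv z hzC hz, hS z hzC u hu (hCu z hzC hzv)]
  have hcover : G.neighborSet v ⊆ (G.neighborSet v \ C) ∪ (C \ {v}) := by
    intro z hz
    by_cases hzC : z ∈ C
    exacts [Or.inr ⟨hzC, fun h => G.irrefl (h ▸ hz)⟩, Or.inl ⟨hz, hzC⟩]
  calc gDeg G v ≤ (G.neighborSet v \ C).ncard + (C \ {v}).ncard :=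
        (Set.ncard_le_ncard hcover).trans (Set.ncard_union_le _ _)
    _ = (T₁ ∪ T₂).ncard := by rw [Set.ncard_union_eq hdisj, hT₁, hT₂]
    _ ≤ S.ncard := Set.ncard_le_ncard hsub

section TwoUniversal

variable {u₁ u₂ x y : V} (h12 : u₁ ≠ u₂) (hu₁ : ∀ v, v ≠ u₁ → G.Adj u₁ v)
  (hu₂ : ∀ v, v ≠ u₂ → G.Adj u₂ v) (hxy : x ≠ y) (hnadj : ¬ G.Adj x y)
include h12 hu₁ hu₂ hxy hnadj

lemma minDeg_le_ncard_of_not_connected {S : Set (Sym2 V)}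
    (hS : ¬ ((G.deleteEdges {s(u₁, u₂)}).deleteEdges S).Connected) : minDeg G ≤ S.ncard := by
  set H := G.deleteEdges {s(u₁, u₂)}
  have : Nonempty V := ⟨u₁⟩
  obtain ⟨y, hy⟩ : ∃ y, ¬ (H.deleteEdges S).Reachable u₁ y := by
    by_contra! h
    exact hS ⟨fun z w => (h z).symm.trans (h w)⟩
  set C := {z | ¬ (H.deleteEdges S).Reachable u₁ z}
  have hu₁C : u₁ ∉ C := fun h => h .rfl
  have hbdry : ∀ z ∈ C, ∀ w ∉ C, H.Adj z w → s(z, w) ∈ S := by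
    intro z hz w hw hzw
    by_contra hs
    exact hz ((not_not.mp hw).trans
      (deleteEdges_adj.mpr ⟨hzw.symm, by rwa [Sym2.eq_swap]⟩).reachable)
  have hHu₁ : ∀ z ∈ C, z ≠ u₂ → H.Adj z u₁ := by
    intro z hz hzu₂
    refine deleteEdges_adj.mpr ⟨(hu₁ z (ne_of_mem_of_not_mem hz hu₁C)).symm, ?_⟩
    rw [Set.mem_singleton_iff, Sym2.eq_iff]
    rintro (⟨rfl, -⟩ | ⟨rfl, -⟩)
    exacts [hu₁C hz, hzu₂ rfl]
  by_cases hu₂C : u₂ ∈ C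
  · -- separating `u₁` from `u₂` costs at least `|V| - 2 ≥ deg x` edges
    refine (minDeg_le_gDeg x).trans <| (gDeg_le_card_sub_two_of_not_adj hxy hnadj).trans <|
      le_trans ?_ (gDeg_le_ncard_of_boundary_subset hbdry hu₁C hu₂C hHu₁)
    rw [← ncard_compl_pair h12]
    refine Set.ncard_le_ncard fun z hz => ?_
    simp only [Set.mem_compl_iff, Set.mem_insert_iff, Set.mem_singleton_iff, not_or] at hz
    refine deleteEdges_adj.mpr ⟨hu₂ z hz.2, ?_⟩
    rw [Set.mem_singleton_iff, Sym2.eq_iff]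
    rintro (⟨h, -⟩ | ⟨-, h⟩)
    exacts [h12 h.symm, hz.1 h]
  · have hyu₂ : y ≠ u₂ := fun h => hu₂C (h ▸ hy)
    have hyu₁ : y ≠ u₁ := fun h => hu₁C (h ▸ hy)
    calc minDeg G ≤ gDeg G y := minDeg_le_gDeg y
      _ = gDeg H y := (gDeg_deleteEdges_singleton hyu₁ hyu₂).symm
      _ ≤ S.ncard := gDeg_le_ncard_of_boundary_subset hbdry hu₁C hy
          fun z hz _ => hHu₁ z hz fun h => hu₂C (h ▸ hz)

lemma minDeg_le_edgeConn_deleteEdges : minDeg G ≤ edgeConn (G.deleteEdges {s(u₁, u₂)}) := by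
  have : Nontrivial V := ⟨⟨u₁, u₂, h12⟩⟩
  refine le_csInf ⟨_, _, subset_rfl, rfl, ?_⟩ ?_
  · rw [deleteEdges_eq_bot.mpr subset_rfl]
    exact not_connected_bot
  · rintro _ ⟨S, -, rfl, hS⟩
    exact minDeg_le_ncard_of_not_connected h12 hu₁ hu₂ hxy hnadj hS

theorem not_minEdgeConnected_of_two_universal : ¬ MinEdgeConnected G := by
  intro hmin
  have : Nonempty V := ⟨u₁⟩
  obtain ⟨w, hw⟩ := exists_gDeg_eq_minDeg (G := G)
  obtain ⟨u, hwu⟩ : ∃ u, G.Adj w u := by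
    by_cases h : w = u₁
    exacts [⟨u₂, h ▸ hu₁ u₂ h12.symm⟩, ⟨u₁, (hu₁ w h).symm⟩]
  have hpos : 0 < minDeg G := hw ▸ (Set.ncard_pos).mpr ⟨u, hwu⟩
  have hle : edgeConn G ≤ minDeg G := hw ▸ edgeConn_le_gDeg hwu.ne'
  have hge := minDeg_le_edgeConn_deleteEdges h12 hu₁ hu₂ hxy hnadj
  have := hmin s(u₁, u₂) (hu₁ u₂ h12.symm)
  omega

end TwoUniversal

end EdgeConnectivity

lemma superpowerGraph_adj {G : Type*} [Group G] {x y : G} :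
    (superpowerGraph G).Adj x y ↔ x ≠ y ∧ (orderOf x ∣ orderOf y ∨ orderOf y ∣ orderOf x) :=
  SimpleGraph.fromRel_adj _ _ _

theorem superpowerGraph_not_minEdgeConnected {G : Type*} [Group G] [Finite G] {g : G}
    (hg : Monoid.exponent G = orderOf g) {p q : ℕ} (hp : p.Prime) (hq : q.Prime) (hpq : p ≠ q)
    (hpg : p ∣ orderOf g) (hqg : q ∣ orderOf g) :
    ¬ MinEdgeConnected (superpowerGraph G) := by
  have hg0 : orderOf g ≠ 0 := (orderOf_pos g).ne'
  have hx : orderOf (g ^ (orderOf g / p)) = p := orderOf_pow_orderOf_div hg0 hpg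
  have hy : orderOf (g ^ (orderOf g / q)) = q := orderOf_pow_orderOf_div hg0 hqg
  refine not_minEdgeConnected_of_two_universal (u₁ := 1) (u₂ := g)
    (x := g ^ (orderOf g / p)) (y := g ^ (orderOf g / q)) ?_
    (fun v hv => superpowerGraph_adj.mpr ⟨hv.symm, .inl (by simp)⟩)
    (fun v hv => superpowerGraph_adj.mpr ⟨hv.symm, .inr (hg ▸ Monoid.order_dvd_exponent v)⟩)
    (fun h => hpq (by rw [← hx, ← hy, h])) ?_
  · rintro rfl
    exact hp.one_lt.ne' (Nat.dvd_one.mp (orderOf_one (G := G) ▸ hpg))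
  · rw [superpowerGraph_adj, hx, hy, Nat.prime_dvd_prime_iff_eq hp hq,
      Nat.prime_dvd_prime_iff_eq hq hp]
    tauto

namespace SemidihedralGroup

variable {n : ℕ}

variable (n) in
def a : SemidihedralGroup n := PresentedGroup.of 0

variable (n) in
def b : SemidihedralGroup n := PresentedGroup.of 1

lemma a_pow_four_mul : a n ^ (4 * n) = 1 :=
  PresentedGroup.one_of_mem (rels := sdRels n) (by simp [sdRels])

lemma b_sq : b n ^ 2 = 1 :=
  PresentedGroup.one_of_mem (rels := sdRels n) (by simp [sdRels])

lemma b_mul_a : b n * a n = a n ^ (2 * n - 1) * b n :=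
  PresentedGroup.mk_eq_mk_of_mul_inv_mem (rels := sdRels n) (by simp [sdRels])

lemma b_mul_a_pow (k : ℕ) : b n * a n ^ k = a n ^ ((2 * n - 1) * k) * b n := by
  induction k with
  | zero => simp
  | succ k ih =>
    rw [pow_succ, ← mul_assoc, ih, mul_assoc, b_mul_a, ← mul_assoc, ← pow_add, mul_add_one]

lemma inv_a (hn : 0 < n) : (a n)⁻¹ = a n ^ (4 * n - 1) :=
  inv_eq_of_mul_eq_one_right <| by rw [← pow_succ', Nat.sub_add_cancel (by omega), a_pow_four_mul]

lemma inv_b : (b n)⁻¹ = b n := inv_eq_of_mul_eq_one_right <| by rw [← sq, b_sq]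

lemma exists_eq_a_pow_or_eq_a_pow_mul_b (hn : 0 < n) (x : SemidihedralGroup n) :
    ∃ i, x = a n ^ i ∨ x = a n ^ i * b n := by
  have hmul_a_pow : ∀ k y, (∃ i, y = a n ^ i ∨ y = a n ^ i * b n) →
      ∃ i, a n ^ k * y = a n ^ i ∨ a n ^ k * y = a n ^ i * b n := by
    rintro k _ ⟨i, rfl | rfl⟩
    exacts [⟨k + i, .inl (pow_add ..).symm⟩, ⟨k + i, .inr (by rw [pow_add, mul_assoc])⟩]
  have hmul_b : ∀ y, (∃ i, y = a n ^ i ∨ y = a n ^ i * b n) →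
      ∃ i, b n * y = a n ^ i ∨ b n * y = a n ^ i * b n := by
    rintro _ ⟨i, rfl | rfl⟩
    · exact ⟨_, .inr (b_mul_a_pow i)⟩
    · refine ⟨(2 * n - 1) * i, .inl ?_⟩
      rw [← mul_assoc, b_mul_a_pow, mul_assoc, ← sq, b_sq, mul_one]
  have hx : x ∈ Subgroup.closure (Set.range PresentedGroup.of) := by
    rw [PresentedGroup.closure_range_of]
    exact Subgroup.mem_top x
  induction hx using Subgroup.closure_induction_left with
  | one => exact ⟨0, .inl (pow_zero _).symm⟩
  | mul_left g hg y _ hy =>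
    obtain ⟨j, rfl⟩ := hg
    fin_cases j
    · exact pow_one (a n) ▸ hmul_a_pow 1 y hy
    · exact hmul_b y hy
  | inv_mul_cancel g hg y _ hy =>
    obtain ⟨j, rfl⟩ := hg
    fin_cases j
    · exact inv_a hn ▸ hmul_a_pow _ y hy
    · exact inv_b (n := n) ▸ hmul_b y hy

lemma pow_four_mul_eq_one (hn : 0 < n) (x : SemidihedralGroup n) : x ^ (4 * n) = 1 := by
  obtain ⟨i, rfl | rfl⟩ := exists_eq_a_pow_or_eq_a_pow_mul_b hn x
  · rw [← pow_mul, mul_comm, pow_mul, a_pow_four_mul, one_pow]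
  · have hsq : (a n ^ i * b n) ^ 2 = a n ^ (2 * n * i) := by
      rw [sq, mul_assoc, ← mul_assoc (b n), b_mul_a_pow, mul_assoc, ← sq, b_sq, mul_one,
        ← pow_add, ← one_add_mul, Nat.add_sub_cancel' (by omega)]
    rw [show 4 * n = 2 * 2 * n by ring, mul_assoc, pow_mul, hsq, ← pow_mul,
      show 2 * n * i * (2 * n) = 4 * n * (i * n) by ring, pow_mul, a_pow_four_mul, one_pow]

lemma finite (hn : 0 < n) : Finite (SemidihedralGroup n) := by
  refine Finite.of_surjective (fun p : Fin (4 * n) × Fin 2 => a n ^ (p.1 : ℕ) * b n ^ (p.2 : ℕ))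
    fun x => ?_
  have hmod : ∀ i, a n ^ i = a n ^ (i % (4 * n)) := fun i => pow_eq_pow_mod i a_pow_four_mul
  obtain ⟨i, rfl | rfl⟩ := exists_eq_a_pow_or_eq_a_pow_mul_b hn x
  · exact ⟨(⟨i % (4 * n), Nat.mod_lt _ (by omega)⟩, 0), by simp [← hmod]⟩
  · exact ⟨(⟨i % (4 * n), Nat.mod_lt _ (by omega)⟩, 1), by simp [← hmod]⟩

lemma two_mul_sub_one_mul_self :
    (2 * (n : ZMod (4 * n)) - 1) * (2 * n - 1) = 1 := by
  have h4n : 4 * (n : ZMod (4 * n)) = 0 := by exact_mod_cast ZMod.natCast_self (4 * n)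
  linear_combination ((n : ZMod (4 * n)) - 1) * h4n

variable (n) in
def permA : Equiv.Perm (ZMod (4 * n)) := Equiv.addLeft 1

variable (n) in
def permB : Equiv.Perm (ZMod (4 * n)) :=
  Function.Involutive.toPerm (fun x => (2 * n - 1) * x) fun x => by
    change (2 * n - 1) * ((2 * n - 1) * x) = x
    rw [← mul_assoc, two_mul_sub_one_mul_self, one_mul]

lemma permA_pow_apply (k : ℕ) (x : ZMod (4 * n)) : (permA n ^ k) x = k + x := by
  induction k with
  | zero => simp
  | succ k ih =>
    rw [pow_succ', Equiv.Perm.mul_apply, ih]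
    simp only [permA, Equiv.coe_addLeft, Nat.cast_succ]
    ring

lemma permB_apply (x : ZMod (4 * n)) : permB n x = (2 * n - 1) * x := rfl

lemma lift_perm_of_mem_sdRels (hn : 0 < n) :
    ∀ r ∈ sdRels n, FreeGroup.lift ![permA n, permB n] r = 1 := by
  rintro r (rfl | rfl | rfl) <;>
    simp only [map_mul, map_inv, map_pow, FreeGroup.lift_apply_of, Matrix.cons_val_zero,
      Matrix.cons_val_one, mul_inv_eq_one] <;> ext x
  · simp [permA_pow_apply]
  · simp [sq, permB_apply, ← mul_assoc, two_mul_sub_one_mul_self]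
  · rw [Equiv.Perm.mul_apply, Equiv.Perm.mul_apply, permA_pow_apply, permB_apply, permB_apply,
      Nat.cast_sub (by omega)]
    simp only [permA, Equiv.coe_addLeft]
    push_cast
    ring

def toPerm (hn : 0 < n) : SemidihedralGroup n →* Equiv.Perm (ZMod (4 * n)) :=
  PresentedGroup.toGroup (lift_perm_of_mem_sdRels hn)

lemma toPerm_a (hn : 0 < n) : toPerm hn (a n) = permA n := PresentedGroup.toGroup.of _

lemma orderOf_a (hn : 0 < n) : orderOf (a n) = 4 * n := by
  refine Nat.dvd_antisymm (orderOf_dvd_of_pow_eq_one a_pow_four_mul) ?_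
  have h : (permA n ^ orderOf (a n)) 0 = 0 := by
    rw [← toPerm_a hn, ← map_pow, pow_orderOf_eq_one, map_one, Equiv.Perm.one_apply]
  rwa [permA_pow_apply, add_zero, ZMod.natCast_eq_zero_iff] at h

lemma exponent_eq_orderOf_a (hn : 0 < n) :
    Monoid.exponent (SemidihedralGroup n) = orderOf (a n) :=
  Nat.dvd_antisymm
    (orderOf_a hn ▸ Monoid.exponent_dvd_of_forall_pow_eq_one (pow_four_mul_eq_one hn))
    (Monoid.order_dvd_exponent _)

end SemidihedralGroup

/-- For `n ≥ 2` not a power of `2`, the order superpower graph of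
the semidihedral group of order `8n` is not minimally edge connected. -/
theorem stmt_14 (n : ℕ) (hn : 2 ≤ n) (hpow : ¬ ∃ k : ℕ, n = 2 ^ k) :
    ¬ MinEdgeConnected (superpowerGraph (SemidihedralGroup n)) := by
  have hn0 : 0 < n := by omega
  obtain ⟨p, hp, hpn, hp_odd⟩ :=
    (Nat.eq_two_pow_or_exists_odd_prime_and_dvd n).resolve_left hpow
  have := SemidihedralGroup.finite hn0
  have hord := SemidihedralGroup.orderOf_a hn0
  refine superpowerGraph_not_minEdgeConnected (SemidihedralGroup.exponent_eq_orderOf_a hn0)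
    Nat.prime_two hp ?_ (hord ▸ Dvd.intro (2 * n) (by ring)) (hord ▸ hpn.mul_left 4)
  rintro rfl
  exact Nat.not_odd_iff_even.mpr even_two hp_odd
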